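/- Define the computed value of a binary-tree summation of 2^n terms a_0,…,a_{2^n−1} recursively by: S_comp of a single term is a_j(1+θ_j)+λ_j, and S_comp of a block of 2^{m+1} terms is (S_comp(left half) + S_comp(right half))(1+θ)+λ, where every θ satisfies |θ| ≤ ε and every λ satisfies |λ| ≤ δ. Then |S_comp − Σ_j a_j| ≤ ((1+ε)^{n+1} − 1)·Σ_j |a_j| + δ·Σ_{j=0}^{n} 2^j (1+ε)^j. -/

import Mathlib

/-! Induction on the depth. One rounding-and-merging step turns an approximation `x` of an
exact sum `s` into `x (1 + θ) + λ`, whose error is at most `(1 + ε) |x - s| + ε |s| + δ`.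
At a node of depth `m + 1` the two children have errors at most `((1 + ε)^(m+1) - 1) A_i + δ T_m`,
where `A_i` is the sum of `|a_j|` over the child's block and `T_m = ∑_{j ≤ m} (2 (1 + ε))^j`;
the step then gives exactly `((1 + ε)^(m+2) - 1) (A_1 + A_2) + δ (2 (1 + ε) T_m + 1)`,
and `2 (1 + ε) T_m + 1 = T_(m+1)`. -/

/-- Computed value of a binary-tree summation: `treeComp a θL lamL θN lamN m k`
is the computed sum of the block of `2^m` terms `a (k*2^m), …, a ((k+1)*2^m - 1)`,
with rounding `(1+θ)` and merging error `λ` at every leaf and internal node. -/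
def treeComp (a θL lamL : ℕ → ℝ) (θN lamN : ℕ → ℕ → ℝ) : ℕ → ℕ → ℝ
  | 0, k => a k * (1 + θL k) + lamL k
  | m + 1, k =>
      (treeComp a θL lamL θN lamN m (2 * k) + treeComp a θL lamL θN lamN m (2 * k + 1))
        * (1 + θN m k) + lamN m k

open Finset

def blockSum {M : Type*} [AddCommMonoid M] (f : ℕ → M) (m k : ℕ) : M :=
  ∑ j ∈ range (2 ^ m), f (k * 2 ^ m + j)

theorem blockSum_succ {M : Type*} [AddCommMonoid M] (f : ℕ → M) (m k : ℕ) :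
    blockSum f (m + 1) k = blockSum f m (2 * k) + blockSum f m (2 * k + 1) := by
  rw [blockSum, pow_succ, mul_two, sum_range_add]
  congr 1 <;> refine sum_congr rfl fun j _ => congrArg f ?_ <;> ring

theorem abs_round_sub_le {x s θ lam ε δ : ℝ} (hθ : |θ| ≤ ε) (hlam : |lam| ≤ δ) :
    |x * (1 + θ) + lam - s| ≤ (1 + ε) * |x - s| + ε * |s| + δ := by
  have h1θ : |1 + θ| ≤ 1 + ε := (abs_add_le 1 θ).trans (by rw [abs_one]; linarith)
  calc |x * (1 + θ) + lam - s| = |(x - s) * (1 + θ) + (s * θ + lam)| := by ring_nf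
    _ ≤ |x - s| * |1 + θ| + (|s| * |θ| + |lam|) := by
      rw [← abs_mul, ← abs_mul]
      exact (abs_add_le _ _).trans (add_le_add_right (abs_add_le _ _) _)
    _ ≤ (1 + ε) * |x - s| + ε * |s| + δ := by
      have := mul_le_mul_of_nonneg_left h1θ (abs_nonneg (x - s))
      have := mul_le_mul_of_nonneg_left hθ (abs_nonneg s)
      linarith

theorem abs_treeComp_sub_blockSum_le {ε δ : ℝ} {a θL lamL : ℕ → ℝ} {θN lamN : ℕ → ℕ → ℝ}
    (hθL : ∀ j, |θL j| ≤ ε) (hlamL : ∀ j, |lamL j| ≤ δ)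
    (hθN : ∀ m k, |θN m k| ≤ ε) (hlamN : ∀ m k, |lamN m k| ≤ δ) (m k : ℕ) :
    |treeComp a θL lamL θN lamN m k - blockSum a m k|
      ≤ ((1 + ε) ^ (m + 1) - 1) * blockSum (|a ·|) m k
        + δ * ∑ j ∈ range (m + 1), (2 * (1 + ε)) ^ j := by
  induction m generalizing k with
  | zero =>
    have := abs_round_sub_le (x := a k) (s := a k) (hθL k) (hlamL k)
    simpa [treeComp, blockSum] using this
  | succ m ih =>
    set L := treeComp a θL lamL θN lamN m (2 * k)
    set R := treeComp a θL lamL θN lamN m (2 * k + 1)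
    set T := ∑ j ∈ range (m + 1), (2 * (1 + ε)) ^ j
    have h1ε : 0 ≤ 1 + ε := by linarith [(abs_nonneg _).trans (hθN m k)]
    have hsum : |blockSum a m (2 * k) + blockSum a m (2 * k + 1)|
        ≤ blockSum (|a ·|) m (2 * k) + blockSum (|a ·|) m (2 * k + 1) :=
      (abs_add_le _ _).trans (add_le_add (abs_sum_le_sum_abs _ _) (abs_sum_le_sum_abs _ _))
    have hchildren : |L + R - (blockSum a m (2 * k) + blockSum a m (2 * k + 1))|
        ≤ ((1 + ε) ^ (m + 1) - 1)
            * (blockSum (|a ·|) m (2 * k) + blockSum (|a ·|) m (2 * k + 1)) + 2 * (δ * T) := by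
      have := ih (2 * k)
      have := ih (2 * k + 1)
      calc _ ≤ |L - blockSum a m (2 * k)| + |R - blockSum a m (2 * k + 1)| := by
            rw [add_sub_add_comm]; exact abs_add_le _ _
        _ ≤ _ := by linarith
    rw [blockSum_succ, blockSum_succ, geom_sum_succ]
    calc _ ≤ (1 + ε) * |L + R - (blockSum a m (2 * k) + blockSum a m (2 * k + 1))|
          + ε * |blockSum a m (2 * k) + blockSum a m (2 * k + 1)| + δ :=
          abs_round_sub_le (hθN m k) (hlamN m k)
      _ ≤ (1 + ε) * (((1 + ε) ^ (m + 1) - 1)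
            * (blockSum (|a ·|) m (2 * k) + blockSum (|a ·|) m (2 * k + 1)) + 2 * (δ * T))
          + ε * (blockSum (|a ·|) m (2 * k) + blockSum (|a ·|) m (2 * k + 1)) + δ := by
          gcongr
          linarith [(abs_nonneg _).trans (hθN m k)]
      _ = _ := by ring

theorem stmt_1_general (n : ℕ) (ε δ : ℝ)
    (a θL lamL : ℕ → ℝ) (θN lamN : ℕ → ℕ → ℝ)
    (hθL : ∀ j, |θL j| ≤ ε) (hlamL : ∀ j, |lamL j| ≤ δ)
    (hθN : ∀ m k, |θN m k| ≤ ε) (hlamN : ∀ m k, |lamN m k| ≤ δ) :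
    |treeComp a θL lamL θN lamN n 0 - ∑ j ∈ Finset.range (2 ^ n), a j|
      ≤ ((1 + ε) ^ (n + 1) - 1) * ∑ j ∈ Finset.range (2 ^ n), |a j|
        + δ * ∑ j ∈ Finset.range (n + 1), (2 : ℝ) ^ j * (1 + ε) ^ j := by
  simpa [blockSum, mul_pow] using
    abs_treeComp_sub_blockSum_le hθL hlamL hθN hlamN n 0

theorem stmt_1 (n : ℕ) (ε δ : ℝ) (hε : 0 ≤ ε) (hδ : 0 ≤ δ)
    (a θL lamL : ℕ → ℝ) (θN lamN : ℕ → ℕ → ℝ)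
    (hθL : ∀ j, |θL j| ≤ ε) (hlamL : ∀ j, |lamL j| ≤ δ)
    (hθN : ∀ m k, |θN m k| ≤ ε) (hlamN : ∀ m k, |lamN m k| ≤ δ) :
    |treeComp a θL lamL θN lamN n 0 - ∑ j ∈ Finset.range (2 ^ n), a j|
      ≤ ((1 + ε) ^ (n + 1) - 1) * ∑ j ∈ Finset.range (2 ^ n), |a j|
        + δ * ∑ j ∈ Finset.range (n + 1), (2 : ℝ) ^ j * (1 + ε) ^ j :=
  stmt_1_general n ε δ a θL lamL θN lamN hθL hlamL hθN hlamN
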